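/- arXiv:2508.12299 — 3 statements merged into one kernel-verified Lean document; each statement's English description precedes it below -/
import Mathlib

section
/- Let s = 1/(2d), d ≥ 3, and for integers l, m, n, r ≥ 1 define η₁[l,m,n,r](x) = Σ_{u} D^{*2}(u)^l D(x-u)^m Σ_{s'} D(s')^n D(u-s')^r, where D is the nearest-neighbor step distribution on Z^d (sums over u, s' ∈ Z^d). Then: η₁[l,m,n,r](e_1) = s^{l+m+n+r-1} (1 + 2^{l+1} s^l − (2^{l+2} − 1) s^{l+1}), η₁[l,m,n,r](2e_1+e_2) = s^{2l+m+n+r}(1 + 2^{l+1}), and η₁[l,m,n,r](e_1+e_2+e_3) = 3·2^{l+1} s^{2l+m+n+r}. -/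
open scoped BigOperators

noncomputable def nnD (d : ℕ) (x : Fin d → ℤ) : ℝ :=
  if (∑ i, (x i).natAbs) = 1 then 1 / (2 * d) else 0

noncomputable def conv {d : ℕ} (f g : (Fin d → ℤ) → ℝ) (x : Fin d → ℤ) : ℝ :=
  ∑' y : Fin d → ℤ, f y * g (x - y)

/-- `η₁[l,m,n,r](x) = ∑_u D^{*2}(u)^l D(x-u)^m ∑_{s'} D(s')^n D(u-s')^r`. -/
noncomputable def eta1 (d l m n r : ℕ) (x : Fin d → ℤ) : ℝ :=
  ∑' u : Fin d → ℤ,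
    (conv (nnD d) (nnD d) u) ^ l * nnD d (x - u) ^ m *
      ∑' s' : Fin d → ℤ, nnD d s' ^ n * nnD d (u - s') ^ r

/-!
Since `D` lives on the `2d` unit vectors, `D^{*2}(u) = s² N(u)` and
`∑_{s'} D(s')ⁿ D(u - s')ʳ = s^{n+r} N(u)`, where `N(u)` (`twoStepCount u`) is the
number of two-step nearest-neighbour paths from `0` to `u`. Hence
`η₁(x) = s^{2l+m+n+r} ∑_e N(x - e)^{l+1}`, the sum running over the unit vectors `e`.
Moreover `N(0) = 2d`, `N(u) = 0` if `‖u‖₁ ≥ 3`, and `N(u)` is the number of nonzero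
coordinates of `u` if `‖u‖₁ = 2`. At `e₁` this gives `(2d)^{l+1} + 1 + 2(d - 1) 2^{l+1}`;
at a point of `ℓ¹`-norm `3` with nonnegative coordinates only the steps `e = e_j` with
`x_j > 0` contribute.
-/

open Finset

namespace SimpleRandomWalk

variable {d : ℕ}

def l1Norm (u : Fin d → ℤ) : ℕ := ∑ i, (u i).natAbs

def unitVec (p : Fin d × Bool) : Fin d → ℤ := Pi.single p.1 (if p.2 then 1 else -1)

def twoStepCount (u : Fin d → ℤ) : ℕ := #{p | l1Norm (u - unitVec p) = 1}

lemma nnD_eq_ite (x : Fin d → ℤ) : nnD d x = if l1Norm x = 1 then 1 / (2 * (d : ℝ)) else 0 :=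
  rfl

lemma l1Norm_eq_zero {u : Fin d → ℤ} : l1Norm u = 0 ↔ u = 0 := by
  simp [l1Norm, sum_eq_zero_iff, funext_iff]

lemma l1Norm_neg (u : Fin d → ℤ) : l1Norm (-u) = l1Norm u := by
  simp [l1Norm]

lemma natAbs_le_l1Norm (u : Fin d → ℤ) (j : Fin d) : (u j).natAbs ≤ l1Norm u :=
  single_le_sum (f := fun i => (u i).natAbs) (fun _ _ => Nat.zero_le _) (mem_univ j)

lemma l1Norm_le_l1Norm_sub_add (u v : Fin d → ℤ) : l1Norm u ≤ l1Norm (u - v) + l1Norm v := by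
  rw [l1Norm, l1Norm, l1Norm, ← sum_add_distrib]
  refine sum_le_sum fun i _ => ?_
  simpa using Int.natAbs_add_le (u i - v i) (v i)

lemma l1Norm_update (u : Fin d → ℤ) (j : Fin d) (a : ℤ) :
    l1Norm (Function.update u j a) + (u j).natAbs = l1Norm u + a.natAbs := by
  simp only [l1Norm, Function.apply_update (fun _ => Int.natAbs),
    sum_update_of_mem (mem_univ j), Fintype.sum_eq_add_sum_compl j, compl_eq_univ_sdiff]
  ring

lemma sub_single_eq_update (u : Fin d → ℤ) (j : Fin d) (σ : ℤ) :
    u - Pi.single j σ = Function.update u j (u j - σ) := by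
  ext k
  by_cases hk : k = j <;> simp [hk]

lemma add_single_eq_update (u : Fin d → ℤ) (j : Fin d) (σ : ℤ) :
    u + Pi.single j σ = Function.update u j (u j + σ) := by
  ext k
  by_cases hk : k = j <;> simp [hk]

lemma l1Norm_sub_single (u : Fin d → ℤ) (j : Fin d) (σ : ℤ) :
    l1Norm (u - Pi.single j σ) + (u j).natAbs = l1Norm u + (u j - σ).natAbs := by
  rw [sub_single_eq_update, l1Norm_update]

lemma l1Norm_single (i : Fin d) (a : ℤ) : l1Norm (Pi.single i a) = a.natAbs := by
  have h := l1Norm_update (0 : Fin d → ℤ) i a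
  rw [l1Norm_eq_zero.mpr rfl, Pi.zero_apply, Int.natAbs_zero, add_zero, zero_add] at h
  exact h

lemma l1Norm_add_single {u : Fin d → ℤ} {j : Fin d} (hj : u j = 0) (a : ℤ) :
    l1Norm (u + Pi.single j a) = l1Norm u + a.natAbs := by
  have h := l1Norm_update u j a
  rw [hj, Int.natAbs_zero, add_zero] at h
  rw [add_single_eq_update, hj, zero_add, h]

lemma l1Norm_single_add_single {i j : Fin d} (hij : i ≠ j) (a b : ℤ) :
    l1Norm (Pi.single i a + Pi.single j b) = a.natAbs + b.natAbs := by
  rw [l1Norm_add_single (Pi.single_eq_of_ne' hij a), l1Norm_single]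

lemma l1Norm_unitVec (p : Fin d × Bool) : l1Norm (unitVec p) = 1 := by
  obtain ⟨i, _ | _⟩ := p <;> simp [unitVec, l1Norm_single]

lemma unitVec_injective : Function.Injective (unitVec (d := d)) := by
  rintro ⟨i, b⟩ ⟨j, c⟩ h
  have hi := congrFun h i
  by_cases hij : i = j
  · subst hij
    cases b <;> cases c <;> simp_all [unitVec]
  · cases b <;> simp [unitVec, Pi.single_eq_of_ne hij] at hi

lemma exists_unitVec_of_l1Norm_eq_one {y : Fin d → ℤ} (hy : l1Norm y = 1) :
    ∃ p, unitVec p = y := by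
  obtain ⟨i, hi⟩ : ∃ i, y i ≠ 0 := by
    by_contra! h
    simp [l1Norm, h] at hy
  have h := l1Norm_update y i 0
  have hrest : Function.update y i 0 = 0 := l1Norm_eq_zero.mp (by omega)
  refine ⟨(i, decide (0 < y i)), funext fun k => ?_⟩
  by_cases hk : k = i
  · subst hk
    simp only [unitVec, Pi.single_eq_same, decide_eq_true_eq]
    split_ifs <;> omega
  · simpa [unitVec, hk] using (congrFun hrest k).symm

lemma tsum_eq_sum_unitVec (x : Fin d → ℤ) (f : (Fin d → ℤ) → ℝ)
    (hf : ∀ u, l1Norm (x - u) ≠ 1 → f u = 0) :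
    ∑' u, f u = ∑ p, f (x - unitVec p) := by
  have hinj : Function.Injective fun p => x - unitVec p :=
    fun p q h => unitVec_injective (sub_right_injective h)
  have hsupp : Function.support f ⊆ Set.range fun p => x - unitVec p := by
    intro u hu
    obtain ⟨p, hp⟩ := exists_unitVec_of_l1Norm_eq_one (not_imp_comm.mp (hf u) hu)
    exact ⟨p, by simp [hp]⟩
  rw [← hinj.tsum_eq hsupp, tsum_fintype]

lemma tsum_nnD_pow_mul_nnD_pow {a b : ℕ} (ha : a ≠ 0) (hb : b ≠ 0) (u : Fin d → ℤ) :
    ∑' y, nnD d y ^ a * nnD d (u - y) ^ b = (1 / (2 * (d : ℝ))) ^ (a + b) * twoStepCount u := by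
  have hterm : ∀ p, nnD d (u - unitVec p) ^ a * nnD d (u - (u - unitVec p)) ^ b =
      if l1Norm (u - unitVec p) = 1 then (1 / (2 * (d : ℝ))) ^ (a + b) else 0 := fun p => by
    rw [sub_sub_cancel, nnD_eq_ite (unitVec p), nnD_eq_ite (u - unitVec p), l1Norm_unitVec,
      if_pos rfl]
    split_ifs
    · rw [pow_add]
    · rw [zero_pow ha, zero_mul]
  rw [tsum_eq_sum_unitVec u _ fun y hy => by rw [nnD_eq_ite (u - y), if_neg hy, zero_pow hb,
    mul_zero], sum_congr rfl fun p _ => hterm p, sum_ite, sum_const, sum_const_zero, add_zero,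
    nsmul_eq_mul, twoStepCount, mul_comm]

lemma conv_nnD_nnD (u : Fin d → ℤ) :
    conv (nnD d) (nnD d) u = (1 / (2 * (d : ℝ))) ^ 2 * twoStepCount u := by
  simpa [conv] using tsum_nnD_pow_mul_nnD_pow one_ne_zero one_ne_zero u

lemma eta1_eq_sum_twoStepCount (l : ℕ) {m n r : ℕ} (hm : m ≠ 0) (hn : n ≠ 0) (hr : r ≠ 0)
    (x : Fin d → ℤ) :
    eta1 d l m n r x = (1 / (2 * (d : ℝ))) ^ (2 * l + m + n + r) *
      ∑ p, (twoStepCount (x - unitVec p) : ℝ) ^ (l + 1) := by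
  rw [eta1, tsum_eq_sum_unitVec x _ fun u hu => by rw [nnD_eq_ite (x - u), if_neg hu,
    zero_pow hm, mul_zero, zero_mul], mul_sum]
  refine sum_congr rfl fun p _ => ?_
  rw [conv_nnD_nnD, tsum_nnD_pow_mul_nnD_pow hn hr, sub_sub_cancel, nnD_eq_ite, l1Norm_unitVec,
    if_pos rfl, mul_pow, ← pow_mul]
  ring

lemma twoStepCount_zero : twoStepCount (0 : Fin d → ℤ) = 2 * d := by
  simp [twoStepCount, l1Norm_neg, l1Norm_unitVec, mul_comm]

lemma twoStepCount_eq_zero_of_three_le {u : Fin d → ℤ} (hu : 3 ≤ l1Norm u) :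
    twoStepCount u = 0 := by
  rw [twoStepCount, card_eq_zero, filter_eq_empty_iff]
  intro p _ hp
  have := l1Norm_le_l1Norm_sub_add u (unitVec p)
  rw [hp, l1Norm_unitVec] at this
  omega

lemma twoStepCount_eq_card_support {u : Fin d → ℤ} (hu : l1Norm u = 2) :
    twoStepCount u = #{k | u k ≠ 0} := by
  rw [twoStepCount, card_filter, Fintype.sum_prod_type, card_filter]
  refine sum_congr rfl fun k _ => ?_
  have h₁ := l1Norm_sub_single u k 1
  have h₂ := l1Norm_sub_single u k (-1)
  have hle := natAbs_le_l1Norm u k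
  simp only [Fintype.sum_bool, unitVec, if_true, Bool.false_eq_true, if_false]
  split_ifs <;> omega

lemma twoStepCount_single_two (i : Fin d) : twoStepCount (Pi.single i 2) = 1 := by
  rw [twoStepCount_eq_card_support (by rw [l1Norm_single]; rfl), card_eq_one]
  refine ⟨i, ?_⟩
  ext k
  by_cases hk : k = i <;> simp [hk]

lemma twoStepCount_single_add_single {i j : Fin d} (hij : i ≠ j) {a b : ℤ}
    (ha : a.natAbs = 1) (hb : b.natAbs = 1) :
    twoStepCount (Pi.single i a + Pi.single j b) = 2 := by
  rw [twoStepCount_eq_card_support (by rw [l1Norm_single_add_single hij, ha, hb]), card_eq_two]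
  refine ⟨i, j, hij, ?_⟩
  ext k
  by_cases hki : k = i <;> by_cases hkj : k = j <;> simp_all <;> omega

-- A step against the sign of `x j` raises the `ℓ¹`-norm to `4`.
lemma twoStepCount_sub_single_eq_zero {x : Fin d → ℤ} (hx : l1Norm x = 3) {j : Fin d} {σ : ℤ}
    (hσ : σ.natAbs = 1) (hxσ : x j * σ ≤ 0) : twoStepCount (x - Pi.single j σ) = 0 := by
  refine twoStepCount_eq_zero_of_three_le ?_
  have := l1Norm_sub_single x j σ
  rcases Int.natAbs_eq_iff.mp hσ with rfl | rfl <;> omega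

lemma sum_twoStepCount_single_sub_unitVec (i : Fin d) (k : ℕ) :
    ∑ p, (twoStepCount (Pi.single i 1 - unitVec p) : ℝ) ^ k
      = (2 * d : ℝ) ^ k + 1 + (d - 1) * (2 * 2 ^ k) := by
  have hii : ∑ b, (twoStepCount (Pi.single i 1 - unitVec (i, b)) : ℝ) ^ k
      = (2 * d : ℝ) ^ k + 1 := by
    have hneg : Pi.single i 1 - unitVec (i, false) = Pi.single i 2 := by
      rw [unitVec, ← Pi.single_sub]; norm_num
    rw [Fintype.sum_bool, hneg, twoStepCount_single_two, unitVec, if_pos rfl, sub_self,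
      twoStepCount_zero]
    push_cast
    ring
  have hoff : ∀ j ∈ ({i}ᶜ : Finset (Fin d)),
      ∑ b, (twoStepCount (Pi.single i 1 - unitVec (j, b)) : ℝ) ^ k = 2 * 2 ^ k := by
    intro j hj
    have hji : i ≠ j := fun h => by simp [h] at hj
    simp only [Fintype.sum_bool, unitVec, sub_eq_add_neg, ← Pi.single_neg]
    rw [twoStepCount_single_add_single hji rfl rfl, twoStepCount_single_add_single hji rfl rfl]
    ring
  rw [Fintype.sum_prod_type, Fintype.sum_eq_add_sum_compl i, hii, sum_congr rfl hoff, sum_const,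
    card_compl, card_singleton, Fintype.card_fin, nsmul_eq_mul, Nat.cast_sub i.pos]
  push_cast
  ring

lemma sum_twoStepCount_sub_unitVec_of_nonneg {x : Fin d → ℤ} (hx : l1Norm x = 3)
    (hx₀ : ∀ j, 0 ≤ x j) {k : ℕ} (hk : k ≠ 0) :
    ∑ p, (twoStepCount (x - unitVec p) : ℝ) ^ k
      = ∑ j, (twoStepCount (x - Pi.single j 1) : ℝ) ^ k := by
  refine (Fintype.sum_prod_type _).trans (sum_congr rfl fun j _ => ?_)
  have hneg := twoStepCount_sub_single_eq_zero hx (σ := -1) rfl (by linarith [hx₀ j])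
  simp [unitVec, hneg, zero_pow hk]

lemma twoStepCount_sub_single_of_eq_zero {x : Fin d → ℤ} (hx : l1Norm x = 3) {j : Fin d}
    (hj : x j = 0) : twoStepCount (x - Pi.single j 1) = 0 :=
  twoStepCount_sub_single_eq_zero hx rfl (by simp [hj])

variable {l m n r : ℕ}

lemma eta1_single (hm : m ≠ 0) (hn : n ≠ 0) (hr : r ≠ 0) (i : Fin d) :
    eta1 d l m n r (Pi.single i 1)
      = (1 / (2 * (d : ℝ))) ^ (l + m + n + r - 1) *
          (1 + 2 ^ (l + 1) * (1 / (2 * (d : ℝ))) ^ l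
            - (2 ^ (l + 2) - 1) * (1 / (2 * (d : ℝ))) ^ (l + 1)) := by
  rw [eta1_eq_sum_twoStepCount l hm hn hr, sum_twoStepCount_single_sub_unitVec]
  obtain ⟨m, rfl⟩ := Nat.exists_eq_add_one_of_ne_zero hm
  rw [show l + (m + 1) + n + r - 1 = l + m + n + r by omega]
  have hs : 1 / (2 * (d : ℝ)) * (2 * d) = 1 := by
    have : (d : ℝ) ≠ 0 := Nat.cast_ne_zero.mpr i.pos.ne'
    field_simp
  generalize 1 / (2 * (d : ℝ)) = s at hs ⊢
  have hp : (s * (2 * d)) ^ (l + 1) = 1 := by rw [hs, one_pow]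
  linear_combination s ^ (l + m + n + r) * hp + 2 ^ (l + 1) * s ^ (2 * l + m + n + r) * hs

lemma eta1_two_single_add_single (hm : m ≠ 0) (hn : n ≠ 0) (hr : r ≠ 0) {i j : Fin d}
    (hij : i ≠ j) :
    eta1 d l m n r (Pi.single i 2 + Pi.single j 1)
      = (1 / (2 * (d : ℝ))) ^ (2 * l + m + n + r) * (1 + 2 ^ (l + 1)) := by
  set x : Fin d → ℤ := Pi.single i 2 + Pi.single j 1
  have hx : l1Norm x = 3 := l1Norm_single_add_single hij 2 1
  have hx₀ : ∀ k, 0 ≤ x k := fun k => by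
    by_cases hki : k = i <;> by_cases hkj : k = j <;> simp_all [x]
  have hxi : x - Pi.single i 1 = Pi.single i 1 + Pi.single j 1 := by
    ext k
    by_cases hki : k = i <;> by_cases hkj : k = j <;> simp_all [x]
  have hxj : x - Pi.single j 1 = Pi.single i 2 := by
    ext k
    by_cases hki : k = i <;> by_cases hkj : k = j <;> simp_all [x]
  have hrest : ∀ k, k ≠ i ∧ k ≠ j → (twoStepCount (x - Pi.single k 1) : ℝ) ^ (l + 1) = 0 :=
    fun k hk => by
      rw [twoStepCount_sub_single_of_eq_zero hx (by simp [x, hk.1, hk.2]), Nat.cast_zero,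
        zero_pow l.succ_ne_zero]
  rw [eta1_eq_sum_twoStepCount l hm hn hr, sum_twoStepCount_sub_unitVec_of_nonneg hx hx₀
    l.succ_ne_zero, Fintype.sum_eq_add i j hij hrest, hxi, hxj,
    twoStepCount_single_add_single hij rfl rfl, twoStepCount_single_two]
  push_cast
  ring

lemma eta1_single_add_single_add_single (hm : m ≠ 0) (hn : n ≠ 0) (hr : r ≠ 0)
    {i j k : Fin d} (hij : i ≠ j) (hik : i ≠ k) (hjk : j ≠ k) :
    eta1 d l m n r (Pi.single i 1 + Pi.single j 1 + Pi.single k 1)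
      = 3 * 2 ^ (l + 1) * (1 / (2 * (d : ℝ))) ^ (2 * l + m + n + r) := by
  set x : Fin d → ℤ := Pi.single i 1 + Pi.single j 1 + Pi.single k 1
  have hx : l1Norm x = 3 := by
    rw [l1Norm_add_single (by simp [hik, hjk]), l1Norm_single_add_single hij]
    rfl
  have hx₀ : ∀ t, 0 ≤ x t := fun t => by
    by_cases hti : t = i <;> by_cases htj : t = j <;> by_cases htk : t = k <;> simp_all [x]
  have hsub : ∀ {a b c : Fin d}, a ≠ b → a ≠ c → b ≠ c →
      x = Pi.single a 1 + Pi.single b 1 + Pi.single c 1 →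
      twoStepCount (x - Pi.single a 1) = 2 := fun hab hac hbc hx' => by
    rw [hx', add_assoc, add_sub_cancel_left, twoStepCount_single_add_single hbc rfl rfl]
  have hxi := hsub hij hik hjk rfl
  have hxj := hsub hij.symm hjk hik (by simp only [x]; abel)
  have hxk := hsub hik.symm hjk.symm hij (by simp only [x]; abel)
  have hrest : ∀ t ∈ univ, t ∉ ({i, j, k} : Finset (Fin d)) →
      (twoStepCount (x - Pi.single t 1) : ℝ) ^ (l + 1) = 0 := fun t _ ht => by
    simp only [mem_insert, mem_singleton, not_or] at ht
    rw [twoStepCount_sub_single_of_eq_zero hx (by simp [x, ht.1, ht.2.1, ht.2.2]),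
      Nat.cast_zero, zero_pow l.succ_ne_zero]
  rw [eta1_eq_sum_twoStepCount l hm hn hr, sum_twoStepCount_sub_unitVec_of_nonneg hx hx₀
    l.succ_ne_zero, ← sum_subset (subset_univ _) hrest, sum_insert (by simp [hij, hik]),
    sum_pair hjk, hxi, hxj, hxk]
  push_cast
  ring

end SimpleRandomWalk

/-- Values of `η₁[l,m,n,r]` at `e₁`, `2e₁+e₂` and `e₁+e₂+e₃`, with `s = 1/(2d)`. -/
theorem eta1_values (d l m n r : ℕ) (hd : 3 ≤ d)
    (hm : 1 ≤ m) (hn : 1 ≤ n) (hr : 1 ≤ r) :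
    eta1 d l m n r (Pi.single (⟨0, by omega⟩ : Fin d) 1)
      = (1 / (2 * (d : ℝ))) ^ (l + m + n + r - 1) *
          (1 + 2 ^ (l + 1) * (1 / (2 * (d : ℝ))) ^ l
            - (2 ^ (l + 2) - 1) * (1 / (2 * (d : ℝ))) ^ (l + 1)) ∧
    eta1 d l m n r (Pi.single (⟨0, by omega⟩ : Fin d) 2 + Pi.single (⟨1, by omega⟩ : Fin d) 1)
      = (1 / (2 * (d : ℝ))) ^ (2 * l + m + n + r) * (1 + 2 ^ (l + 1)) ∧
    eta1 d l m n r (Pi.single (⟨0, by omega⟩ : Fin d) 1 + Pi.single (⟨1, by omega⟩ : Fin d) 1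
        + Pi.single (⟨2, by omega⟩ : Fin d) 1)
      = 3 * 2 ^ (l + 1) * (1 / (2 * (d : ℝ))) ^ (2 * l + m + n + r) := by
  have h01 : (⟨0, by omega⟩ : Fin d) ≠ ⟨1, by omega⟩ := by simp
  have h02 : (⟨0, by omega⟩ : Fin d) ≠ ⟨2, by omega⟩ := by simp
  have h12 : (⟨1, by omega⟩ : Fin d) ≠ ⟨2, by omega⟩ := by simp
  have hm₀ : m ≠ 0 := by omega
  have hn₀ : n ≠ 0 := by omega
  have hr₀ : r ≠ 0 := by omega
  exact ⟨SimpleRandomWalk.eta1_single hm₀ hn₀ hr₀ _,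
    SimpleRandomWalk.eta1_two_single_add_single hm₀ hn₀ hr₀ h01,
    SimpleRandomWalk.eta1_single_add_single_add_single hm₀ hn₀ hr₀ h01 h02 h12⟩
end

section
/- Let s = 1/(2d), d ≥ 3, and for integer l ≥ 1 define η₃[l](x) = Σ_{s', u} D(s')² D(u-s')^l D(x-u)², sums over lattice points s', u ∈ Z^d with D the nearest-neighbor step distribution. Then η₃[l](e_1) = 3 s^{l+3}(1-s), η₃[l](2e_1+e_2) = 3 s^{l+4}, and η₃[l](e_1+e_2+e_3) = 6 s^{l+4}. -/
open scoped BigOperators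

/-- `η₃[l](x) = ∑_{s',u} D(s')² D(u-s')^l D(x-u)²`. -/
noncomputable def eta3 (d l : ℕ) (x : Fin d → ℤ) : ℝ :=
  ∑' s' : Fin d → ℤ, ∑' u : Fin d → ℤ,
    nnD d s' ^ 2 * nnD d (u - s') ^ l * nnD d (x - u) ^ 2

/-!
Since `l ≥ 1` and `D` is `s` times the indicator of the unit vectors, every power `D^k`
(`k ≥ 1`) is `s^k` times that indicator, so `η₃[l](x) = s^(l+4) N₃(x)`, where `N_n(x)` is the
number of `n`-step nearest-neighbour walks from `0` to `x`.

If `‖x‖₁ = n`, every step of such a walk must decrease the distance to `x`, and removing the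
last step gives the multinomial count `N_n(x) ∏ᵢ |xᵢ|! = n!`. Hence `N₃(2e₁+e₂) = 3` and
`N₃(e₁+e₂+e₃) = 6`. For `e₁`, split off the last step:
`N₃(e₁) = N₂(0) + N₂(2e₁) + ∑_{i ≠ 1, ±} N₂(e₁ ∓ eᵢ) = 2d + 1 + 4(d - 1)`.
-/

namespace LatticeWalk

open Finset Function Nat

variable {d : ℕ}

def step (p : Fin d × ℤˣ) : Fin d → ℤ := Pi.single p.1 (p.2 : ℤ)

def l1Norm (x : Fin d → ℤ) : ℕ := ∑ i, (x i).natAbs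

def factorialProd (x : Fin d → ℤ) : ℕ := ∏ i, (x i).natAbs !

def walkCount : ℕ → (Fin d → ℤ) → ℕ
  | 0, x => if x = 0 then 1 else 0
  | n + 1, x => ∑ p : Fin d × ℤˣ, walkCount n (x - step p)

lemma sum_units_int {M : Type*} [AddCommMonoid M] (f : ℤˣ → M) :
    ∑ u, f u = f 1 + f (-1) := by
  rw [show (univ : Finset ℤˣ) = {1, -1} from rfl, sum_pair (by decide)]

lemma natAbs_sub_units_int (a : ℤ) (u : ℤˣ) :
    (a - u).natAbs + 1 = a.natAbs ∨ (a - u).natAbs = a.natAbs + 1 := by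
  rcases Int.units_eq_one_or u with rfl | rfl <;> simp only [Units.val_one, Units.val_neg] <;> omega

@[to_additive]
lemma prod_apply_update_mul {ι α M : Type*} [Fintype ι] [DecidableEq ι] [CommMonoid M]
    (g : α → M) (x : ι → α) (i : ι) (v : α) :
    (∏ j, g (update x i v j)) * g (x i) = (∏ j, g (x j)) * g v := by
  rw [← mul_prod_erase univ _ (mem_univ i),
    ← mul_prod_erase univ (fun j => g (x j)) (mem_univ i), update_self,
    prod_congr rfl fun j hj => by rw [update_of_ne (ne_of_mem_erase hj)]]
  ac_rfl

lemma sub_step_eq_update (x : Fin d → ℤ) (i : Fin d) (u : ℤˣ) :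
    x - step (i, u) = update x i (x i - u) := by
  rw [Pi.update_eq_sub_add_single, step, Pi.single_sub]
  abel

lemma add_single_eq_update {x : Fin d → ℤ} {i : Fin d} (hx : x i = 0) (c : ℤ) :
    x + Pi.single i c = update x i c := by
  rw [Pi.update_eq_sub_add_single, hx, Pi.single_zero, sub_zero]

lemma l1Norm_update (x : Fin d → ℤ) (i : Fin d) (v : ℤ) :
    l1Norm (update x i v) + (x i).natAbs = l1Norm x + v.natAbs :=
  sum_apply_update_add (fun a : ℤ => a.natAbs) x i v

lemma factorialProd_update (x : Fin d → ℤ) (i : Fin d) (v : ℤ) :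
    factorialProd (update x i v) * (x i).natAbs ! = factorialProd x * v.natAbs ! :=
  prod_apply_update_mul (fun a : ℤ => a.natAbs !) x i v

lemma l1Norm_eq_zero_iff {x : Fin d → ℤ} : l1Norm x = 0 ↔ x = 0 := by
  simp [l1Norm, sum_eq_zero_iff, funext_iff]

lemma l1Norm_add_single {x : Fin d → ℤ} {i : Fin d} (hx : x i = 0) (c : ℤ) :
    l1Norm (x + Pi.single i c) = l1Norm x + c.natAbs := by
  simpa [hx, add_single_eq_update hx] using l1Norm_update x i c

lemma factorialProd_add_single {x : Fin d → ℤ} {i : Fin d} (hx : x i = 0) (c : ℤ) :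
    factorialProd (x + Pi.single i c) = factorialProd x * c.natAbs ! := by
  simpa [hx, add_single_eq_update hx] using factorialProd_update x i c

lemma l1Norm_single (i : Fin d) (c : ℤ) : l1Norm (Pi.single i c) = c.natAbs := by
  simpa [l1Norm_eq_zero_iff.mpr rfl] using l1Norm_add_single (x := 0) (i := i) rfl c

lemma factorialProd_single (i : Fin d) (c : ℤ) : factorialProd (Pi.single i c) = c.natAbs ! := by
  simpa [factorialProd] using factorialProd_add_single (x := 0) (i := i) rfl c

lemma l1Norm_le_l1Norm_sub_step_add_one (x : Fin d → ℤ) (p : Fin d × ℤˣ) :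
    l1Norm x ≤ l1Norm (x - step p) + 1 := by
  obtain ⟨i, u⟩ := p
  have h := l1Norm_update x i (x i - u)
  rw [← sub_step_eq_update] at h
  rcases natAbs_sub_units_int (x i) u with h' | h' <;> omega

lemma walkCount_eq_zero_of_lt :
    ∀ {n : ℕ} {x : Fin d → ℤ}, n < l1Norm x → walkCount n x = 0
  | 0, x, h => if_neg (by rintro rfl; simp [l1Norm] at h)
  | n + 1, x, h => sum_eq_zero fun p _ =>
      walkCount_eq_zero_of_lt (by have := l1Norm_le_l1Norm_sub_step_add_one x p; omega)

lemma sum_units_int_ite_natAbs (a : ℤ) :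
    ∑ u : ℤˣ, (if (a - u).natAbs + 1 = a.natAbs then a.natAbs else 0) = a.natAbs := by
  rw [sum_units_int]
  simp only [Units.val_one, Units.val_neg]
  split_ifs <;> omega

lemma walkCount_sub_step_mul_factorialProd {n : ℕ}
    (ih : ∀ y : Fin d → ℤ, l1Norm y = n → walkCount n y * factorialProd y = n !)
    {x : Fin d → ℤ} (hx : l1Norm x = n + 1) (i : Fin d) (u : ℤˣ) :
    walkCount n (x - step (i, u)) * factorialProd x
      = n ! * if (x i - u).natAbs + 1 = (x i).natAbs then (x i).natAbs else 0 := by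
  have hl := l1Norm_update x i (x i - u)
  have hf := factorialProd_update x i (x i - u)
  rw [← sub_step_eq_update] at hl hf
  split_ifs with h
  · have hx' : factorialProd x = factorialProd (x - step (i, u)) * (x i).natAbs := by
      apply Nat.eq_of_mul_eq_mul_right (factorial_pos (x i - u).natAbs)
      rw [← hf, ← h, factorial_succ]
      ring
    rw [hx', ← mul_assoc, ih _ (by omega)]
  · rcases natAbs_sub_units_int (x i) u with h' | h'
    · exact absurd h' h
    · rw [walkCount_eq_zero_of_lt (by omega), zero_mul, mul_zero]

theorem walkCount_mul_factorialProd :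
    ∀ {n : ℕ} {x : Fin d → ℤ}, l1Norm x = n → walkCount n x * factorialProd x = n !
  | 0, x, h => by simp [l1Norm_eq_zero_iff.mp h, walkCount, factorialProd]
  | n + 1, x, h => calc
      walkCount (n + 1) x * factorialProd x
          = ∑ i, ∑ u : ℤˣ, walkCount n (x - step (i, u)) * factorialProd x := by
        rw [walkCount, sum_mul, Fintype.sum_prod_type]
      _ = ∑ i, n ! * (x i).natAbs := sum_congr rfl fun i _ => by
        simp_rw [walkCount_sub_step_mul_factorialProd (fun _ => walkCount_mul_factorialProd) h,
          ← mul_sum, sum_units_int_ite_natAbs]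
      _ = (n + 1)! := by rw [← mul_sum, ← l1Norm, h, factorial_succ, mul_comm]

lemma walkCount_eq_factorial_div {n : ℕ} {x : Fin d → ℤ} (h : l1Norm x = n) :
    walkCount n x = n ! / factorialProd x :=
  Nat.eq_div_of_mul_eq_left (prod_ne_zero_iff.mpr fun _ _ => factorial_ne_zero _)
    (walkCount_mul_factorialProd h)

lemma factorialProd_eq_one_of_l1Norm_le_one {x : Fin d → ℤ} (h : l1Norm x ≤ 1) :
    factorialProd x = 1 :=
  prod_eq_one fun i _ => factorial_eq_one.mpr <|
    (single_le_sum (f := fun j => (x j).natAbs) (by simp) (mem_univ i)).trans h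

lemma walkCount_one (x : Fin d → ℤ) : walkCount 1 x = if l1Norm x = 1 then 1 else 0 := by
  split_ifs with h
  · rw [walkCount_eq_factorial_div h, factorialProd_eq_one_of_l1Norm_le_one h.le]
    rfl
  rcases Nat.lt_or_gt_of_ne h with h0 | h2
  · rw [Nat.lt_one_iff, l1Norm_eq_zero_iff] at h0
    subst h0
    refine sum_eq_zero fun p _ => if_neg ?_
    simp [step, Pi.single_eq_zero_iff]
  · exact walkCount_eq_zero_of_lt h2

lemma walkCount_two_zero : walkCount 2 (0 : Fin d → ℤ) = 2 * d := by
  have h : ∀ p : Fin d × ℤˣ, walkCount 1 (0 - step p) = 1 := fun p => by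
    rw [walkCount_one, if_pos]
    simp [step, ← Pi.single_neg, l1Norm_single]
  rw [walkCount, sum_congr rfl fun p _ => h p]
  simp [mul_comm]

lemma sum_walkCount_two_single_one_sub_step_eq_update (a i : Fin d) :
    ∑ u : ℤˣ, walkCount 2 (Pi.single a 1 - step (i, u)) = if i = a then 2 * d + 1 else 4 := by
  split_ifs with hia
  · subst hia
    have h0 : Pi.single i 1 - step (i, 1) = 0 := by simp [step]
    have h2 : Pi.single i 1 - step (i, -1) = Pi.single i 2 := by
      rw [step, ← Pi.single_sub]
      norm_num
    rw [sum_units_int, h0, h2, walkCount_two_zero,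
      walkCount_eq_factorial_div (n := 2) (l1Norm_single i 2), factorialProd_single]
    rfl
  · have hx : (Pi.single a 1 : Fin d → ℤ) i = 0 := Pi.single_eq_of_ne hia _
    have h2 (u : ℤˣ) : walkCount 2 (Pi.single a 1 - step (i, u)) = 2 := by
      have hu : (-(u : ℤ)).natAbs = 1 := by simp
      rw [step, sub_eq_add_neg, ← Pi.single_neg, walkCount_eq_factorial_div
        (by rw [l1Norm_add_single hx, l1Norm_single, hu]; rfl), factorialProd_add_single hx,
        factorialProd_single, hu]
      rfl
    rw [sum_units_int, h2, h2]

lemma walkCount_three_single_one (a : Fin d) : walkCount 3 (Pi.single a 1) + 3 = 6 * d := by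
  rw [walkCount, Fintype.sum_prod_type]
  simp_rw [sum_walkCount_two_single_one_sub_step_eq_update]
  simp only [sum_ite, filter_eq', filter_ne', mem_univ, if_true, sum_const, card_singleton,
    card_erase_of_mem, Finset.card_univ, Fintype.card_fin, smul_eq_mul, one_mul]
  have := a.pos
  omega

lemma walkCount_three_single_two_add_single_one {a b : Fin d} (hab : a ≠ b) :
    walkCount 3 (Pi.single a 2 + Pi.single b 1) = 3 := by
  have hb : (Pi.single a 2 : Fin d → ℤ) b = 0 := Pi.single_eq_of_ne hab.symm _
  have hl : l1Norm (Pi.single a 2 + Pi.single b 1 : Fin d → ℤ) = 3 := by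
    rw [l1Norm_add_single hb, l1Norm_single]; rfl
  rw [walkCount_eq_factorial_div hl, factorialProd_add_single hb, factorialProd_single]
  rfl

lemma walkCount_three_single_one_add_single_one_add_single_one {a b c : Fin d}
    (hab : a ≠ b) (hac : a ≠ c) (hbc : b ≠ c) :
    walkCount 3 (Pi.single a 1 + Pi.single b 1 + Pi.single c 1) = 6 := by
  have hb : (Pi.single a 1 : Fin d → ℤ) b = 0 := Pi.single_eq_of_ne hab.symm _
  have hc : (Pi.single a 1 + Pi.single b 1 : Fin d → ℤ) c = 0 := by
    simp [Pi.single_eq_of_ne hac.symm, Pi.single_eq_of_ne hbc.symm]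
  have hl : l1Norm (Pi.single a 1 + Pi.single b 1 + Pi.single c 1 : Fin d → ℤ) = 3 := by
    rw [l1Norm_add_single hc, l1Norm_add_single hb, l1Norm_single]; rfl
  rw [walkCount_eq_factorial_div hl, factorialProd_add_single hc, factorialProd_add_single hb,
    factorialProd_single]
  rfl

lemma nnD_pow {k : ℕ} (hk : k ≠ 0) (x : Fin d → ℤ) :
    nnD d x ^ k = (1 / (2 * d)) ^ k * walkCount 1 x := by
  rw [nnD, walkCount_one, ← l1Norm]
  split_ifs <;> simp [hk]

lemma hasSum_walkCount_one_mul (a : Fin d → ℤ) (F : (Fin d → ℤ) → ℝ) :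
    HasSum (fun u => (walkCount 1 (u - a) : ℝ) * F u) (∑ q, F (a + step q)) := by
  have h (u : Fin d → ℤ) : (walkCount 1 (u - a) : ℝ) * F u
      = ∑ q, if u = a + step q then F (a + step q) else 0 := by
    simp only [walkCount, Nat.cast_sum, sum_mul, sub_sub, sub_eq_zero]
    refine sum_congr rfl fun q _ => ?_
    split_ifs with h <;> simp [h]
  simpa only [h] using hasSum_sum fun q _ => hasSum_ite_eq (a + step q) (F (a + step q))

lemma tsum_nnD_pow_mul {k : ℕ} (hk : k ≠ 0) (a : Fin d → ℤ) (F : (Fin d → ℤ) → ℝ) :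
    ∑' u, nnD d (u - a) ^ k * F u = (1 / (2 * d)) ^ k * ∑ q, F (a + step q) := by
  simp_rw [nnD_pow hk, mul_assoc]
  rw [tsum_mul_left, (hasSum_walkCount_one_mul a F).tsum_eq]

theorem eta3_eq_walkCount {l : ℕ} (hl : l ≠ 0) (x : Fin d → ℤ) :
    eta3 d l x = (1 / (2 * d)) ^ (l + 4) * walkCount 3 x := by
  calc eta3 d l x
      = ∑' s', nnD d (s' - 0) ^ 2 * ∑' u, nnD d (u - s') ^ l * nnD d (x - u) ^ 2 := by
        simp_rw [eta3, sub_zero, mul_assoc, ← tsum_mul_left]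
    _ = (1 / (2 * d)) ^ 2 *
          ∑ p, (1 / (2 * d)) ^ l * ∑ q, nnD d (x - (0 + step p + step q)) ^ 2 := by
        simp_rw [tsum_nnD_pow_mul hl, tsum_nnD_pow_mul two_ne_zero]
    _ = (1 / (2 * d)) ^ (l + 4) * walkCount 3 x := by
        rw [show walkCount 3 x = ∑ p, ∑ q, walkCount 1 (x - step p - step q) from rfl]
        simp only [nnD_pow two_ne_zero, zero_add, ← sub_sub, ← mul_sum, Nat.cast_sum]
        ring

end LatticeWalk

open LatticeWalk in
/-- Values of `η₃[l]` at `e₁`, `2e₁+e₂` and `e₁+e₂+e₃`, with `s = 1/(2d)`. -/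
theorem eta3_values (d l : ℕ) (hd : 3 ≤ d) (hl : 1 ≤ l) :
    eta3 d l (Pi.single (⟨0, by omega⟩ : Fin d) 1)
      = 3 * (1 / (2 * (d : ℝ))) ^ (l + 3) * (1 - 1 / (2 * (d : ℝ))) ∧
    eta3 d l (Pi.single (⟨0, by omega⟩ : Fin d) 2 + Pi.single (⟨1, by omega⟩ : Fin d) 1)
      = 3 * (1 / (2 * (d : ℝ))) ^ (l + 4) ∧
    eta3 d l (Pi.single (⟨0, by omega⟩ : Fin d) 1 + Pi.single (⟨1, by omega⟩ : Fin d) 1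
        + Pi.single (⟨2, by omega⟩ : Fin d) 1)
      = 6 * (1 / (2 * (d : ℝ))) ^ (l + 4) := by
  have hd0 : (d : ℝ) ≠ 0 := by exact_mod_cast (by omega : d ≠ 0)
  have he₁ : (walkCount 3 (Pi.single (⟨0, by omega⟩ : Fin d) 1) : ℝ) = 6 * d - 3 := by
    rw [eq_sub_iff_add_eq]
    exact_mod_cast walkCount_three_single_one _
  have hl0 : l ≠ 0 := by omega
  refine ⟨?_, ?_, ?_⟩ <;> rw [eta3_eq_walkCount hl0]
  · have hs : 1 / (2 * (d : ℝ)) * (6 * d - 3) = 3 * (1 - 1 / (2 * d)) := by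
      field_simp
      ring
    rw [he₁, pow_succ, mul_assoc, hs]
    ring
  · rw [walkCount_three_single_two_add_single_one (by simp)]
    push_cast
    ring
  · rw [walkCount_three_single_one_add_single_one_add_single_one (by simp) (by simp) (by simp)]
    push_cast
    ring
end

section
/- Suppose p_c = p_c(d) satisfies p_c = 1 + p_c⁵ s² + (p_c⁵/2)(10 p_c² − 3) s³ + (89/8) s⁴ + O(d^{-5}) as d → ∞, where s = 1/(2d), and suppose additionally |p_c − 1| ≤ C/d for some constant C. Then p_c = 1 + s² + (7/2) s³ + (129/8) s⁴ + O(d^{-5}). -/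
open Filter Asymptotics

/-!
Write `e = p_c - 1`. Since `p_c` is bounded, the fixed-point equation gives `e = O(s²)` at once;
feeding this back in, `p_c⁵ - 1 = O(s²)` improves it to `e = s² + O(s³)`; a third pass, using
`p_c⁵ = 1 + 5s² + O(s³)` and `(p_c⁵/2)(10 p_c² − 3) = 7/2 + O(s²)`, determines the expansion up to
`O(s⁵)`. Besides the factorizations of `p_c⁵ - 1` and its relatives by `p_c - 1`, each pass only
needs that a continuous function of the bounded `p_c` stays bounded.
-/

noncomputable def pcFixedPointMap (p s : ℝ) : ℝ :=
  1 + p ^ 5 * s ^ 2 + p ^ 5 / 2 * (10 * p ^ 2 - 3) * s ^ 3 + 89 / 8 * s ^ 4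

section Asymptotics

variable {α E F : Type*} {l : Filter α}

lemma Continuous.comp_isBigO_one [NormedAddCommGroup E] [ProperSpace E] [NormedAddCommGroup F]
    {g : E → F} (hg : Continuous g) {p : α → E} (hp : p =O[l] fun _ => (1 : ℝ)) :
    (fun x => g (p x)) =O[l] fun _ => (1 : ℝ) := by
  obtain ⟨c, hc⟩ := hp.bound
  obtain ⟨M, hM⟩ :=
    (isCompact_closedBall (0 : E) c).exists_bound_of_continuousOn hg.continuousOn
  refine IsBigO.of_bound M (hc.mono fun x hx => ?_)
  simpa using hM (p x) (by simpa using hx)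

lemma Asymptotics.IsBigO.mul_isBigO_one {f h : α → ℝ} {g : α → ℝ} (hf : f =O[l] g)
    (hh : h =O[l] fun _ => (1 : ℝ)) : (fun x => f x * h x) =O[l] g := by
  simpa using hf.mul hh

lemma Asymptotics.IsBigO.mul_pow_add {f h s : α → ℝ} {j k : ℕ}
    (hf : f =O[l] fun x => s x ^ j) (hh : h =O[l] fun x => s x ^ k) :
    (fun x => f x * h x) =O[l] fun x => s x ^ (j + k) := by
  simpa [pow_add] using hf.mul hh

lemma isBigO_pow_of_le {s : α → ℝ} (hs : s =O[l] fun _ => (1 : ℝ)) {j k : ℕ} (hjk : j ≤ k) :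
    (fun x => s x ^ k) =O[l] fun x => s x ^ j := by
  obtain ⟨m, rfl⟩ := Nat.exists_eq_add_of_le hjk
  simpa [pow_add] using (isBigO_refl (fun x => s x ^ j) l).mul (hs.pow m)

lemma Continuous.comp_mul_pow_isBigO {g : ℝ → ℝ} (hg : Continuous g)
    {p s : α → ℝ} (hp : p =O[l] fun _ => (1 : ℝ)) (hs : s =O[l] fun _ => (1 : ℝ))
    {j k : ℕ} (hjk : j ≤ k) :
    (fun x => g (p x) * s x ^ k) =O[l] fun x => s x ^ j :=
  ((isBigO_pow_of_le hs hjk).mul_isBigO_one (hg.comp_isBigO_one hp)).congr_left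
    fun _ => mul_comm _ _

end Asymptotics

section Bootstrap

variable {α : Type*} {l : Filter α} {p s : α → ℝ} (hp : p =O[l] fun _ => (1 : ℝ))
  (hs : s =O[l] fun _ => (1 : ℝ))
  (h : (fun x => p x - pcFixedPointMap (p x) (s x)) =O[l] fun x => s x ^ 5)
include hp hs h

lemma sub_one_isBigO_sq_of_fixedPoint : (fun x => p x - 1) =O[l] fun x => s x ^ 2 := by
  have key : (fun x => p x - 1) = fun x => (p x - pcFixedPointMap (p x) (s x))
      + p x ^ 5 * s x ^ 2 + p x ^ 5 / 2 * (10 * p x ^ 2 - 3) * s x ^ 3 + 89 / 8 * s x ^ 4 := by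
    funext x; simp only [pcFixedPointMap]; ring
  have hterm₂ := (continuous_pow 5).comp_mul_pow_isBigO hp hs (le_refl 2)
  have hterm₃ :=
    (by fun_prop : Continuous fun y : ℝ => y ^ 5 / 2 * (10 * y ^ 2 - 3)).comp_mul_pow_isBigO hp hs
      (show 2 ≤ 3 by norm_num)
  have hterm₄ := (isBigO_pow_of_le hs (show 2 ≤ 4 by norm_num)).const_mul_left (89 / 8)
  rw [key]
  exact (((h.trans (isBigO_pow_of_le hs (by norm_num))).add hterm₂).add hterm₃).add hterm₄

lemma sub_one_sub_sq_isBigO_cube_of_fixedPoint :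
    (fun x => p x - 1 - s x ^ 2) =O[l] fun x => s x ^ 3 := by
  have key : (fun x => p x - 1 - s x ^ 2) = fun x => (p x - pcFixedPointMap (p x) (s x))
      + (p x - 1) * (s x ^ 2 * (p x ^ 4 + p x ^ 3 + p x ^ 2 + p x + 1))
      + p x ^ 5 / 2 * (10 * p x ^ 2 - 3) * s x ^ 3 + 89 / 8 * s x ^ 4 := by
    funext x; simp only [pcFixedPointMap]; ring
  have hterm₂ : (fun x => (p x - 1) * (s x ^ 2 * (p x ^ 4 + p x ^ 3 + p x ^ 2 + p x + 1)))
      =O[l] fun x => s x ^ 3 :=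
    ((sub_one_isBigO_sq_of_fixedPoint hp hs h).mul_pow_add
      ((isBigO_refl (fun x => s x ^ 2) l).mul_isBigO_one
        ((by fun_prop : Continuous fun y : ℝ => y ^ 4 + y ^ 3 + y ^ 2 + y + 1).comp_isBigO_one
          hp))).trans (isBigO_pow_of_le hs (by norm_num))
  have hterm₃ :=
    (by fun_prop : Continuous fun y : ℝ => y ^ 5 / 2 * (10 * y ^ 2 - 3)).comp_mul_pow_isBigO hp hs
      (le_refl 3)
  have hterm₄ := (isBigO_pow_of_le hs (show 3 ≤ 4 by norm_num)).const_mul_left (89 / 8)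
  rw [key]
  exact (((h.trans (isBigO_pow_of_le hs (by norm_num))).add hterm₂).add hterm₃).add hterm₄

lemma sub_expansion_isBigO_pow_five_of_fixedPoint :
    (fun x => p x - (1 + s x ^ 2 + 7 / 2 * s x ^ 3 + 129 / 8 * s x ^ 4))
      =O[l] fun x => s x ^ 5 := by
  have he := sub_one_isBigO_sq_of_fixedPoint hp hs h
  -- `p⁵ - 1 - 5(p - 1) = (p - 1)²(p³ + 2p² + 3p + 4)`; the `s⁴` terms cancel as `89/8 + 5 = 129/8`.
  have key : (fun x => p x - (1 + s x ^ 2 + 7 / 2 * s x ^ 3 + 129 / 8 * s x ^ 4)) = fun x =>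
      (p x - pcFixedPointMap (p x) (s x))
      + (5 * (p x - 1 - s x ^ 2) + (p x - 1) * ((p x - 1) * (p x ^ 3 + 2 * p x ^ 2 + 3 * p x + 4)))
        * s x ^ 2
      + (p x - 1) * (s x ^ 3 * ((10 * p x ^ 6 + 10 * p x ^ 5 + 7 * p x ^ 4 + 7 * p x ^ 3
        + 7 * p x ^ 2 + 7 * p x + 7) / 2)) := by
    funext x; simp only [pcFixedPointMap]; ring
  have he' : (fun x => p x - 1 - s x ^ 2) =O[l] fun x => s x ^ 3 :=
    sub_one_sub_sq_isBigO_cube_of_fixedPoint hp hs h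
  have hquad : (fun x => (p x - 1) * ((p x - 1) * (p x ^ 3 + 2 * p x ^ 2 + 3 * p x + 4)))
      =O[l] fun x => s x ^ 3 :=
    (he.mul_pow_add (he.mul_isBigO_one
      ((by fun_prop : Continuous fun y : ℝ => y ^ 3 + 2 * y ^ 2 + 3 * y + 4).comp_isBigO_one
        hp))).trans (isBigO_pow_of_le hs (by norm_num))
  have hterm₂ := ((he'.const_mul_left 5).add hquad).mul_pow_add (isBigO_refl (fun x => s x ^ 2) l)
  have hterm₃ := he.mul_pow_add ((isBigO_refl (fun x => s x ^ 3) l).mul_isBigO_one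
    ((by fun_prop : Continuous fun y : ℝ => (10 * y ^ 6 + 10 * y ^ 5 + 7 * y ^ 4 + 7 * y ^ 3
      + 7 * y ^ 2 + 7 * y + 7) / 2).comp_isBigO_one hp))
  rw [key]
  exact (h.add hterm₂).add hterm₃

end Bootstrap

/-- Substituting the expansion of `p_c` into its own fixed-point equation:
if `p_c = 1 + p_c⁵ s² + (p_c⁵/2)(10 p_c² − 3) s³ + (89/8) s⁴ + O(d⁻⁵)` with `s = 1/(2d)`
and `|p_c − 1| ≤ C/d`, then `p_c = 1 + s² + (7/2) s³ + (129/8) s⁴ + O(d⁻⁵)`. -/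
theorem pc_expansion_selfconsistency (pc : ℕ → ℝ) (C : ℝ)
    (h1 : (fun d : ℕ => pc d -
        (1 + (pc d) ^ 5 * (1 / (2 * (d : ℝ))) ^ 2
          + (pc d) ^ 5 / 2 * (10 * (pc d) ^ 2 - 3) * (1 / (2 * (d : ℝ))) ^ 3
          + 89 / 8 * (1 / (2 * (d : ℝ))) ^ 4))
        =O[atTop] fun d : ℕ => ((d : ℝ))⁻¹ ^ 5)
    (h2 : ∀ d : ℕ, 1 ≤ d → |pc d - 1| ≤ C / d) :
    (fun d : ℕ => pc d -
        (1 + (1 / (2 * (d : ℝ))) ^ 2 + 7 / 2 * (1 / (2 * (d : ℝ))) ^ 3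
          + 129 / 8 * (1 / (2 * (d : ℝ))) ^ 4))
      =O[atTop] fun d : ℕ => ((d : ℝ))⁻¹ ^ 5 := by
  have hs : Tendsto (fun d : ℕ => 1 / (2 * (d : ℝ))) atTop (nhds 0) :=
    (tendsto_const_div_atTop_nhds_zero_nat (1 / 2)).congr fun d => by ring
  have hpc : Tendsto pc atTop (nhds 1) := by
    refine tendsto_sub_nhds_zero_iff.mp (squeeze_zero_norm' ?_
      (tendsto_const_div_atTop_nhds_zero_nat C))
    filter_upwards [eventually_ge_atTop 1] with d hd using h2 d hd
  have hscale :
      (fun d : ℕ => ((d : ℝ))⁻¹ ^ 5) =Θ[atTop] fun d : ℕ => (1 / (2 * (d : ℝ))) ^ 5 := by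
    have : (fun d : ℕ => ((d : ℝ))⁻¹ ^ 5) = fun d : ℕ => 32 * (1 / (2 * (d : ℝ))) ^ 5 := by
      funext d; ring
    rw [this]
    exact (isTheta_const_mul_left (by norm_num)).mpr (isTheta_refl _ _)
  exact (sub_expansion_isBigO_pow_five_of_fixedPoint (hpc.isBigO_one ℝ) (hs.isBigO_one ℝ)
    (h1.trans_isTheta hscale)).trans_isTheta hscale.symm
end
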